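/- Let f_1, f_2 be functions in the Nevanlinna class N and let B̂ be the Blaschke product formed with the common zeros of f_1 and f_2 (so that f_1/B̂ and f_2/B̂ belong to N and have no common zeros). Then I(f_1,f_2) = J(f_1,f_2) if and only if I(f_1/B̂, f_2/B̂) = J(f_1/B̂, f_2/B̂). -/

import Mathlib

/-!
Write `f₁ = B g₁`, `f₂ = B g₂` with `B` the Blaschke product. If `v ∈ J(f₁, f₂)`, then
`|v| ≤ e^H (|g₁| + |g₂|) |B|`, so `v / B` has removable singularities at the zeros of `B` and
lies in `J(g₁, g₂)`; when `I(g) = J(g)` this writes `v = B (g₁ h₁ + g₂ h₂) = f₁ h₁ + f₂ h₂`.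
Conversely, for `u ∈ J(g₁, g₂)` the product `B u` lies in `J(f₁, f₂)`; when `I(f) = J(f)`,
`B u = B (g₁ h₁ + g₂ h₂)`, and `B` cancels because it does not vanish identically.

Holomorphy of `B` is read off the factorization: near each point one of `g₁, g₂` is nonzero, and
there `B = fᵢ / gᵢ`. That `B ≢ 0` comes from the Blaschke condition: the estimate
`|1 - b_a(z)| ≤ (1 - |a|)(1 + |z|)/(1 - |z|)` makes the product converge to a nonzero value at
every `z` outside the zero sequence.
-/

open Complex Metric Set Filter

noncomputable section

/-- The open unit disk in `ℂ`. -/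
def unitDisk : Set ℂ := {z : ℂ | ‖z‖ < 1}

/-- A real-valued function is harmonic on a set `Ω ⊆ ℂ` if, near every point of `Ω`,
it is the real part of a holomorphic function. -/
def HarmonicOnSet (u : ℂ → ℝ) (Ω : Set ℂ) : Prop :=
  ∀ z ∈ Ω, ∃ r > 0, Metric.ball z r ⊆ Ω ∧
    ∃ F : ℂ → ℂ, DifferentiableOn ℂ F (Metric.ball z r) ∧
      ∀ w ∈ Metric.ball z r, u w = (F w).re

/-- A positive harmonic function on the unit disk. -/
def PosHarmonic (H : ℂ → ℝ) : Prop :=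
  HarmonicOnSet H unitDisk ∧ ∀ z ∈ unitDisk, 0 < H z

/-- The pseudohyperbolic distance `ρ(z,w) = |z - w| / |1 - z̄ w|`. -/
def pd (z w : ℂ) : ℝ := ‖z - w‖ / ‖1 - (starRingEnd ℂ) z * w‖

/-- The open pseudohyperbolic disk `D(a,r)`. -/
def pBall (a : ℂ) (r : ℝ) : Set ℂ := {w ∈ unitDisk | pd a w < r}

/-- The closed pseudohyperbolic disk. -/
def pClosedBall (a : ℂ) (r : ℝ) : Set ℂ := {w ∈ unitDisk | pd a w ≤ r}

/-- An individual Blaschke factor with zero `a`. -/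
def blaschkeFactor (a z : ℂ) : ℂ :=
  if a = 0 then z
  else ((starRingEnd ℂ) a / (‖a‖ : ℂ)) * ((a - z) / (1 - (starRingEnd ℂ) a * z))

/-- The Blaschke product with zero sequence `Λ`. -/
def blaschkeProduct (Λ : ℕ → ℂ) (z : ℂ) : ℂ := ∏' n, blaschkeFactor (Λ n) z

/-- A Blaschke sequence: a sequence in the unit disk satisfying the Blaschke condition. -/
def BlaschkeSeq (Λ : ℕ → ℂ) : Prop :=
  (∀ n, Λ n ∈ unitDisk) ∧ Summable fun n => 1 - ‖Λ n‖

/-- The Nevanlinna class: holomorphic functions on the disk such that `log⁺ |f|`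
has a positive harmonic majorant. -/
def Nev (f : ℂ → ℂ) : Prop :=
  DifferentiableOn ℂ f unitDisk ∧
  ∃ H : ℂ → ℝ, PosHarmonic H ∧ ∀ z ∈ unitDisk, Real.log (‖f z‖) ≤ H z

/-- `Λ` is an interpolating sequence for the Nevanlinna class. -/
def NevInterpolating (Λ : ℕ → ℂ) : Prop :=
  Function.Injective Λ ∧ (∀ n, Λ n ∈ unitDisk) ∧
  ∃ H : ℂ → ℝ, PosHarmonic H ∧
    ∀ n, Real.exp (-H (Λ n)) ≤ ∏' k : {k : ℕ // k ≠ n}, pd (Λ k.1) (Λ n)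

/-- A Nevanlinna interpolating Blaschke product. -/
def NevInterpBlaschke (B : ℂ → ℂ) : Prop :=
  ∃ Λ : ℕ → ℂ, NevInterpolating Λ ∧ B = blaschkeProduct Λ

/-- The ideal generated by `f 0, …, f (m-1)` in the Nevanlinna class
(membership being recorded through the values on the unit disk). -/
def idealI (m : ℕ) (f : Fin m → ℂ → ℂ) : Set (ℂ → ℂ) :=
  {g | ∃ h : Fin m → ℂ → ℂ, (∀ i, Nev (h i)) ∧
        ∀ z ∈ unitDisk, g z = ∑ i, f i z * h i z}

/-- The set `J(f 0, …, f (m-1))`. -/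
def idealJ (m : ℕ) (f : Fin m → ℂ → ℂ) : Set (ℂ → ℂ) :=
  {g | Nev g ∧ ∃ H : ℂ → ℝ, PosHarmonic H ∧
        ∀ z ∈ unitDisk,
          ‖g z‖ ≤ Real.exp (H z) * ∑ i, ‖f i z‖}

/-- The ideal generated by a pair `f₁, f₂` in the Nevanlinna class. -/
def idealI2 (f₁ f₂ : ℂ → ℂ) : Set (ℂ → ℂ) :=
  {g | ∃ h₁ h₂ : ℂ → ℂ, Nev h₁ ∧ Nev h₂ ∧
        ∀ z ∈ unitDisk, g z = f₁ z * h₁ z + f₂ z * h₂ z}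

/-- The set `J(f₁, f₂)`. -/
def idealJ2 (f₁ f₂ : ℂ → ℂ) : Set (ℂ → ℂ) :=
  {g | Nev g ∧ ∃ H : ℂ → ℝ, PosHarmonic H ∧
        ∀ z ∈ unitDisk,
          ‖g z‖ ≤ Real.exp (H z) * (‖f₁ z‖ + ‖f₂ z‖)}

/-- Harmonic measure, at `z`, of the outer boundary `∂𝔻` in a subdomain `Ω` of the unit
disk, described à la Perron: the supremum of the values `u z` of harmonic functions
`0 ≤ u ≤ 1` on `Ω` whose boundary limits superior vanish at all boundary points of `Ω`
lying inside the unit disk. -/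
def hmOuter (Ω : Set ℂ) (z : ℂ) : ℝ :=
  sSup {t : ℝ | ∃ u : ℂ → ℝ, HarmonicOnSet u Ω ∧
    (∀ w ∈ Ω, 0 ≤ u w ∧ u w ≤ 1) ∧
    (∀ ζ ∈ frontier Ω, ‖ζ‖ < 1 →
      ∀ ε > 0, ∀ᶠ w in nhdsWithin ζ Ω, u w ≤ ε) ∧
    t = u z}

/-- The domain `Ω_n^H`: the unit disk minus the (closed) pseudohyperbolic disks
`𝒟_k^H = D(λ_k, e^{-H(λ_k)})` over the `k ≠ n` with `ρ(λ_k, λ_n) ≤ 1/2`. -/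
def omegaDom (Λ : ℕ → ℂ) (H : ℂ → ℝ) (n : ℕ) : Set ℂ :=
  unitDisk \ ⋃ k ∈ {k : ℕ | k ≠ n ∧ pd (Λ k) (Λ n) ≤ 1/2},
    pClosedBall (Λ k) (Real.exp (-H (Λ k)))

/-- A function invertible in the Nevanlinna class. -/
def NevInvertible (g : ℂ → ℂ) : Prop :=
  Nev g ∧ ∃ h : ℂ → ℂ, Nev h ∧ ∀ z ∈ unitDisk, g z * h z = 1

open Topology ComplexConjugate

lemma unitDisk_eq_ball : unitDisk = ball (0 : ℂ) 1 := by
  ext z; simp [unitDisk]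

lemma isOpen_unitDisk : IsOpen unitDisk := unitDisk_eq_ball ▸ isOpen_ball

lemma isPreconnected_unitDisk : IsPreconnected unitDisk :=
  unitDisk_eq_ball ▸ (convex_ball 0 1).isPreconnected

lemma one_sub_norm_le_norm_one_sub_conj_mul {a z : ℂ} (ha : ‖a‖ ≤ 1) :
    1 - ‖z‖ ≤ ‖1 - conj a * z‖ := by
  have h := norm_sub_norm_le (1 : ℂ) (conj a * z)
  rw [norm_one, norm_mul, Complex.norm_conj] at h
  nlinarith [norm_nonneg z]

lemma one_sub_conj_mul_ne_zero {a z : ℂ} (ha : ‖a‖ ≤ 1) (hz : ‖z‖ < 1) :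
    1 - conj a * z ≠ 0 :=
  norm_pos_iff.1 ((sub_pos.2 hz).trans_le (one_sub_norm_le_norm_one_sub_conj_mul ha))

lemma blaschkeFactor_ne_zero {a z : ℂ} (ha : ‖a‖ ≤ 1) (hz : ‖z‖ < 1) (hza : z ≠ a) :
    blaschkeFactor a z ≠ 0 := by
  unfold blaschkeFactor
  split_ifs with h0
  · exact h0 ▸ hza
  · have : (‖a‖ : ℂ) ≠ 0 := by simpa using h0
    exact mul_ne_zero (div_ne_zero (by simpa using h0) this)
      (div_ne_zero (sub_ne_zero.2 hza.symm) (one_sub_conj_mul_ne_zero ha hz))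

lemma one_sub_blaschkeFactor {a z : ℂ} (ha : ‖a‖ ≤ 1) (hz : ‖z‖ < 1) (h0 : a ≠ 0) :
    1 - blaschkeFactor a z
      = ((1 - ‖a‖ : ℝ) : ℂ) * (‖a‖ + conj a * z) / (‖a‖ * (1 - conj a * z)) := by
  have hna : (‖a‖ : ℂ) ≠ 0 := by simpa using h0
  have hd := one_sub_conj_mul_ne_zero ha hz
  rw [blaschkeFactor, if_neg h0]
  field_simp
  have : conj a * a = (‖a‖ : ℂ) ^ 2 := Complex.conj_mul' a
  push_cast
  linear_combination -this

lemma norm_one_sub_blaschkeFactor_le {a z : ℂ} (ha : ‖a‖ ≤ 1) (hz : ‖z‖ < 1) :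
    ‖1 - blaschkeFactor a z‖ ≤ (1 - ‖a‖) * ((1 + ‖z‖) / (1 - ‖z‖)) := by
  have hz' : 0 < 1 - ‖z‖ := sub_pos.2 hz
  by_cases h0 : a = 0
  · simp only [blaschkeFactor, h0, norm_zero, sub_zero, one_mul]
    calc ‖1 - z‖ ≤ 1 + ‖z‖ := by simpa using norm_sub_le (1 : ℂ) z
      _ ≤ (1 + ‖z‖) / (1 - ‖z‖) := le_div_self (by positivity) hz' (by linarith [norm_nonneg z])
  · have hna : 0 < ‖a‖ := norm_pos_iff.2 h0
    have hnum : ‖(‖a‖ : ℂ) + conj a * z‖ ≤ ‖a‖ * (1 + ‖z‖) := by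
      calc _ ≤ ‖(‖a‖ : ℂ)‖ + ‖conj a * z‖ := norm_add_le _ _
        _ = ‖a‖ * (1 + ‖z‖) := by
          simp only [Complex.norm_real, norm_norm, norm_mul, Complex.norm_conj]; ring
    rw [one_sub_blaschkeFactor ha hz h0, norm_div, norm_mul, norm_mul, Complex.norm_real,
      Complex.norm_real, Real.norm_of_nonneg (sub_nonneg.2 ha), Real.norm_of_nonneg hna.le,
      mul_div_assoc]
    refine mul_le_mul_of_nonneg_left ?_ (sub_nonneg.2 ha)
    calc _ ≤ ‖a‖ * (1 + ‖z‖) / (‖a‖ * (1 - ‖z‖)) := by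
          gcongr
          exact one_sub_norm_le_norm_one_sub_conj_mul ha
      _ = _ := by rw [mul_div_mul_left _ _ hna.ne']

lemma blaschkeProduct_ne_zero {Λ : ℕ → ℂ} (hΛ : BlaschkeSeq Λ) {z : ℂ} (hz : z ∈ unitDisk)
    (hzΛ : z ∉ range Λ) : blaschkeProduct Λ z ≠ 0 := by
  have hsum : Summable fun n => ‖blaschkeFactor (Λ n) z - 1‖ :=
    (hΛ.2.mul_right _).of_nonneg_of_le (fun _ => norm_nonneg _) fun n => by
      rw [norm_sub_rev]; exact norm_one_sub_blaschkeFactor_le (hΛ.1 n).le hz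
  have hne (n : ℕ) : 1 + (blaschkeFactor (Λ n) z - 1) ≠ 0 := by
    rw [add_sub_cancel]
    exact blaschkeFactor_ne_zero (hΛ.1 n).le hz fun h => hzΛ ⟨n, h.symm⟩
  simpa [blaschkeProduct] using tprod_one_add_ne_zero_of_summable hne hsum

lemma exists_blaschkeProduct_ne_zero {Λ : ℕ → ℂ} (hΛ : BlaschkeSeq Λ) :
    ∃ z ∈ unitDisk, blaschkeProduct Λ z ≠ 0 := by
  obtain ⟨z, hzΛ, hz⟩ := ((countable_range Λ).dense_compl ℂ).exists_mem_open isOpen_unitDisk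
    ⟨0, by simp [unitDisk]⟩
  exact ⟨z, hz, blaschkeProduct_ne_zero hΛ hz hzΛ⟩

lemma HarmonicOnSet.continuousAt {u : ℂ → ℝ} {Ω : Set ℂ} (hu : HarmonicOnSet u Ω) {z : ℂ}
    (hz : z ∈ Ω) : ContinuousAt u z := by
  obtain ⟨r, hr, -, F, hF, hFu⟩ := hu z hz
  have hball : ball z r ∈ 𝓝 z := ball_mem_nhds z hr
  exact (continuous_re.continuousAt.comp (hF.differentiableAt hball).continuousAt).congr
    (eventually_of_mem hball fun w hw => (hFu w hw).symm)

lemma PosHarmonic.continuousOn {H : ℂ → ℝ} (hH : PosHarmonic H) : ContinuousOn H unitDisk :=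
  fun _ hz => (hH.1.continuousAt hz).continuousWithinAt

lemma PosHarmonic.add {H₁ H₂ : ℂ → ℝ} (h₁ : PosHarmonic H₁) (h₂ : PosHarmonic H₂) :
    PosHarmonic (H₁ + H₂) := by
  refine ⟨fun z hz => ?_, fun z hz => add_pos (h₁.2 z hz) (h₂.2 z hz)⟩
  obtain ⟨r₁, hr₁, hb₁, F₁, hF₁, hFu₁⟩ := h₁.1 z hz
  obtain ⟨r₂, hr₂, -, F₂, hF₂, hFu₂⟩ := h₂.1 z hz
  have hsub₁ : ball z (min r₁ r₂) ⊆ ball z r₁ := ball_subset_ball (min_le_left _ _)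
  have hsub₂ : ball z (min r₁ r₂) ⊆ ball z r₂ := ball_subset_ball (min_le_right _ _)
  refine ⟨min r₁ r₂, lt_min hr₁ hr₂, hsub₁.trans hb₁, F₁ + F₂,
    (hF₁.mono hsub₁).add (hF₂.mono hsub₂), fun w hw => ?_⟩
  simp [hFu₁ w (hsub₁ hw), hFu₂ w (hsub₂ hw)]

lemma posHarmonic_const {c : ℝ} (hc : 0 < c) : PosHarmonic fun _ => c := by
  refine ⟨fun z hz => ?_, fun _ _ => hc⟩
  obtain ⟨r, hr, hball⟩ := Metric.isOpen_iff.1 isOpen_unitDisk z hz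
  exact ⟨r, hr, hball, fun _ => c, differentiableOn_const _, fun _ _ => by simp⟩

lemma PosHarmonic.exists_exp_add_exp_le {H₁ H₂ : ℂ → ℝ} (h₁ : PosHarmonic H₁)
    (h₂ : PosHarmonic H₂) : ∃ H, PosHarmonic H ∧
      ∀ z ∈ unitDisk, Real.exp (H₁ z) + Real.exp (H₂ z) ≤ Real.exp (H z) := by
  refine ⟨H₁ + H₂ + fun _ => Real.log 2,
    (h₁.add h₂).add (posHarmonic_const (Real.log_pos one_lt_two)), fun z hz => ?_⟩
  have e₁ := Real.one_le_exp (h₁.2 z hz).le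
  have e₂ := Real.one_le_exp (h₂.2 z hz).le
  simp only [Pi.add_apply, Real.exp_add, Real.exp_log two_pos]
  nlinarith

lemma Nev.exists_norm_le_exp {f : ℂ → ℂ} (hf : Nev f) :
    ∃ H, PosHarmonic H ∧ ∀ z ∈ unitDisk, ‖f z‖ ≤ Real.exp (H z) := by
  obtain ⟨-, H, hH, hlog⟩ := hf
  refine ⟨H, hH, fun z hz => ?_⟩
  rcases (norm_nonneg (f z)).eq_or_lt with h0 | h0
  · exact h0 ▸ (Real.exp_pos _).le
  · exact (Real.log_le_iff_le_exp h0).1 (hlog z hz)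

lemma Nev.of_norm_le_exp {f : ℂ → ℂ} {H : ℂ → ℝ} (hf : DifferentiableOn ℂ f unitDisk)
    (hH : PosHarmonic H) (hfH : ∀ z ∈ unitDisk, ‖f z‖ ≤ Real.exp (H z)) : Nev f := by
  refine ⟨hf, H, hH, fun z hz => ?_⟩
  rcases (norm_nonneg (f z)).eq_or_lt with h0 | h0
  · rw [← h0, Real.log_zero]; exact (hH.2 z hz).le
  · exact (Real.log_le_iff_le_exp h0).2 (hfH z hz)

lemma Nev.exists_norm_add_norm_le {f₁ f₂ : ℂ → ℂ} (hf₁ : Nev f₁) (hf₂ : Nev f₂) :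
    ∃ H, PosHarmonic H ∧ ∀ z ∈ unitDisk, ‖f₁ z‖ + ‖f₂ z‖ ≤ Real.exp (H z) := by
  obtain ⟨H₁, hH₁, hb₁⟩ := hf₁.exists_norm_le_exp
  obtain ⟨H₂, hH₂, hb₂⟩ := hf₂.exists_norm_le_exp
  obtain ⟨H, hH, hle⟩ := hH₁.exists_exp_add_exp_le hH₂
  exact ⟨H, hH, fun z hz => (add_le_add (hb₁ z hz) (hb₂ z hz)).trans (hle z hz)⟩

lemma mem_idealJ2_of_norm_le {f₁ f₂ g : ℂ → ℂ} {H : ℂ → ℝ} (hf₁ : Nev f₁) (hf₂ : Nev f₂)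
    (hg : DifferentiableOn ℂ g unitDisk) (hH : PosHarmonic H)
    (hgH : ∀ z ∈ unitDisk, ‖g z‖ ≤ Real.exp (H z) * (‖f₁ z‖ + ‖f₂ z‖)) :
    g ∈ idealJ2 f₁ f₂ := by
  obtain ⟨A, hA, hfA⟩ := hf₁.exists_norm_add_norm_le hf₂
  refine ⟨Nev.of_norm_le_exp hg (hH.add hA) fun z hz => ?_, H, hH, hgH⟩
  calc ‖g z‖ ≤ Real.exp (H z) * (‖f₁ z‖ + ‖f₂ z‖) := hgH z hz
    _ ≤ Real.exp (H z) * Real.exp (A z) := by gcongr; exact hfA z hz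
    _ = Real.exp ((H + A) z) := by rw [Pi.add_apply, Real.exp_add]

lemma idealI2_subset_idealJ2 {f₁ f₂ : ℂ → ℂ} (hf₁ : Nev f₁) (hf₂ : Nev f₂) :
    idealI2 f₁ f₂ ⊆ idealJ2 f₁ f₂ := by
  rintro g ⟨h₁, h₂, hh₁, hh₂, hg⟩
  obtain ⟨H, hH, hhH⟩ := hh₁.exists_norm_add_norm_le hh₂
  refine mem_idealJ2_of_norm_le hf₁ hf₂
    (((hf₁.1.mul hh₁.1).add (hf₂.1.mul hh₂.1)).congr hg) hH fun z hz => ?_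
  calc ‖g z‖ ≤ ‖f₁ z‖ * ‖h₁ z‖ + ‖f₂ z‖ * ‖h₂ z‖ := by
        rw [hg z hz, ← norm_mul, ← norm_mul]; exact norm_add_le _ _
    _ ≤ (‖h₁ z‖ + ‖h₂ z‖) * (‖f₁ z‖ + ‖f₂ z‖) := by
        nlinarith [norm_nonneg (f₁ z), norm_nonneg (f₂ z), norm_nonneg (h₁ z), norm_nonneg (h₂ z)]
    _ ≤ Real.exp (H z) * (‖f₁ z‖ + ‖f₂ z‖) := by gcongr; exact hhH z hz

section IsolatedZeros

variable {U : Set ℂ} {B : ℂ → ℂ}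

lemma differentiableAt_of_eventually_eq_mul {f g : ℂ → ℂ} {z : ℂ}
    (hf : DifferentiableAt ℂ f z) (hg : DifferentiableAt ℂ g z) (hgz : g z ≠ 0)
    (hfg : ∀ᶠ w in 𝓝 z, f w = B w * g w) : DifferentiableAt ℂ B z := by
  refine (hf.div hg hgz).congr_of_eventuallyEq ?_
  filter_upwards [hfg, hg.continuousAt.eventually_ne hgz] with w hw hgw
  rw [Pi.div_apply, hw, mul_div_cancel_right₀ _ hgw]

lemma eventually_nhdsNE_mem_and_ne_zero (hU : IsOpen U) (hU' : IsPreconnected U)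
    (hB : DifferentiableOn ℂ B U) (hB0 : ∃ z ∈ U, B z ≠ 0) {z : ℂ} (hz : z ∈ U) :
    ∀ᶠ w in 𝓝[≠] z, w ∈ U ∧ B w ≠ 0 := by
  have hA : AnalyticOnNhd ℂ B U := hB.analyticOnNhd hU
  refine (eventually_nhdsWithin_of_eventually_nhds (hU.mem_nhds hz)).and ?_
  refine (hA z hz).eventually_eq_zero_or_eventually_ne_zero.resolve_left fun h => ?_
  obtain ⟨z₀, hz₀, hBz₀⟩ := hB0
  exact hBz₀ (hA.eqOn_zero_of_preconnected_of_eventuallyEq_zero hU' hz h hz₀)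

lemma eqOn_of_mul_eq_mul (hU : IsOpen U) (hU' : IsPreconnected U)
    (hB : DifferentiableOn ℂ B U) (hB0 : ∃ z ∈ U, B z ≠ 0) {u w : ℂ → ℂ}
    (hu : ContinuousOn u U) (hw : ContinuousOn w U) (huw : ∀ z ∈ U, B z * u z = B z * w z) :
    EqOn u w U := by
  intro z hz
  have hev : u =ᶠ[𝓝[≠] z] w :=
    (eventually_nhdsNE_mem_and_ne_zero hU hU' hB hB0 hz).mono fun x ⟨hxU, hBx⟩ =>
      mul_left_cancel₀ hBx (huw x hxU)
  exact (((hu.continuousAt (hU.mem_nhds hz)).eventuallyEq_nhds_iff_eventuallyEq_nhdsNE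
    (hw.continuousAt (hU.mem_nhds hz))).1 hev).eq_of_nhds

lemma differentiableAt_limUnder_nhdsNE {q : ℂ → ℂ} {z : ℂ} {ε C : ℝ} (hε : 0 < ε)
    (hq : ∀ w ∈ ball z ε, w ≠ z → DifferentiableAt ℂ q w ∧ ‖q w‖ ≤ C) :
    DifferentiableAt ℂ (fun w => limUnder (𝓝[≠] w) q) z := by
  have hball : ball z ε ∈ 𝓝 z := ball_mem_nhds z hε
  have hupd : DifferentiableOn ℂ (Function.update q z (limUnder (𝓝[≠] z) q)) (ball z ε) :=
    Complex.differentiableOn_update_limUnder_of_bddAbove hball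
      (fun w ⟨hw, hwz⟩ => (hq w hw hwz).1.differentiableWithinAt)
      ⟨C, forall_mem_image.2 fun w ⟨hw, hwz⟩ => (hq w hw hwz).2⟩
  refine (hupd.differentiableAt hball).congr_of_eventuallyEq ?_
  filter_upwards [hball] with w hw
  rcases eq_or_ne w z with rfl | hwz
  · simp
  · rw [Function.update_of_ne hwz]
    exact ((hq w hw hwz).1.continuousAt.tendsto.mono_left nhdsWithin_le_nhds).limUnder_eq

lemma exists_eq_mul_of_norm_le (hU : IsOpen U) (hU' : IsPreconnected U)
    (hB : DifferentiableOn ℂ B U) (hB0 : ∃ z ∈ U, B z ≠ 0) {v : ℂ → ℂ} {φ : ℂ → ℝ}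
    (hv : DifferentiableOn ℂ v U) (hφ : ContinuousOn φ U)
    (hvB : ∀ z ∈ U, ‖v z‖ ≤ φ z * ‖B z‖) :
    ∃ u, DifferentiableOn ℂ u U ∧ (∀ z ∈ U, v z = B z * u z) ∧ ∀ z ∈ U, ‖u z‖ ≤ φ z := by
  set q : ℂ → ℂ := fun z => v z / B z
  have hqd : ∀ z ∈ U, B z ≠ 0 → DifferentiableAt ℂ q z := fun z hz hBz =>
    (hv.differentiableAt (hU.mem_nhds hz)).div (hB.differentiableAt (hU.mem_nhds hz)) hBz
  have hqφ : ∀ z ∈ U, B z ≠ 0 → ‖q z‖ ≤ φ z := fun z hz hBz => by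
    rw [norm_div, div_le_iff₀ (norm_pos_iff.2 hBz)]; exact hvB z hz
  have hev : ∀ z ∈ U, ∀ᶠ w in 𝓝[≠] z, w ∈ U ∧ B w ≠ 0 := fun z hz =>
    eventually_nhdsNE_mem_and_ne_zero hU hU' hB hB0 hz
  -- `u = q` off the zeros of `B`; at a zero of `B` the limit removes the singularity of `q`.
  set u : ℂ → ℂ := fun z => limUnder (𝓝[≠] z) q
  have hqu : ∀ z ∈ U, B z ≠ 0 → u z = q z := fun z hz hBz =>
    ((hqd z hz hBz).continuousAt.tendsto.mono_left nhdsWithin_le_nhds).limUnder_eq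
  have hud : ∀ z ∈ U, DifferentiableAt ℂ u z := by
    intro z hz
    have hφz : ∀ᶠ w in 𝓝 z, φ w < φ z + 1 :=
      (hφ.continuousAt (hU.mem_nhds hz)).eventually_lt continuousAt_const (lt_add_one _)
    obtain ⟨ε, hε, hball⟩ :=
      Metric.eventually_nhds_iff_ball.1 ((eventually_nhdsWithin_iff.1 (hev z hz)).and hφz)
    refine differentiableAt_limUnder_nhdsNE (C := φ z + 1) hε fun w hw hwz => ?_
    obtain ⟨⟨hwU, hBw⟩, hφw⟩ := (hball w hw).imp_left (· hwz)
    exact ⟨hqd w hwU hBw, (hqφ w hwU hBw).trans hφw.le⟩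
  refine ⟨u, fun z hz => (hud z hz).differentiableWithinAt, fun z hz => ?_, fun z hz => ?_⟩
  · have hBu : ContinuousAt (fun w => B w * u w) z :=
      ((hB.differentiableAt (hU.mem_nhds hz)).mul (hud z hz)).continuousAt
    refine (((hv.differentiableAt (hU.mem_nhds hz)).continuousAt
      |>.eventuallyEq_nhds_iff_eventuallyEq_nhdsNE hBu).1 ?_).eq_of_nhds
    filter_upwards [hev z hz] with w ⟨hwU, hBw⟩
    rw [hqu w hwU hBw, mul_div_cancel₀ _ hBw]
  · refine le_of_tendsto_of_tendsto (b := 𝓝[≠] z) ((hud z hz).continuousAt.norm.tendsto.mono_left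
      nhdsWithin_le_nhds) ((hφ.continuousAt (hU.mem_nhds hz)).tendsto.mono_left
      nhdsWithin_le_nhds) ?_
    filter_upwards [hev z hz] with w ⟨hwU, hBw⟩
    rw [hqu w hwU hBw]
    exact hqφ w hwU hBw

end IsolatedZeros

section CommonFactor

variable {B f₁ f₂ g₁ g₂ : ℂ → ℂ}

lemma idealI2_eq_idealJ2_cancel_factor (hB : DifferentiableOn ℂ B unitDisk)
    (hB0 : ∃ z ∈ unitDisk, B z ≠ 0) (hf₁ : Nev f₁) (hf₂ : Nev f₂) (hg₁ : Nev g₁) (hg₂ : Nev g₂)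
    (hfac₁ : ∀ z ∈ unitDisk, f₁ z = B z * g₁ z) (hfac₂ : ∀ z ∈ unitDisk, f₂ z = B z * g₂ z)
    (hf : idealI2 f₁ f₂ = idealJ2 f₁ f₂) : idealI2 g₁ g₂ = idealJ2 g₁ g₂ := by
  refine (idealI2_subset_idealJ2 hg₁ hg₂).antisymm fun u ⟨hu, H, hH, huH⟩ => ?_
  have hBu : (fun z => B z * u z) ∈ idealJ2 f₁ f₂ := by
    refine mem_idealJ2_of_norm_le hf₁ hf₂ (hB.mul hu.1) hH fun z hz => ?_
    rw [norm_mul, hfac₁ z hz, hfac₂ z hz, norm_mul, norm_mul]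
    calc ‖B z‖ * ‖u z‖ ≤ ‖B z‖ * (Real.exp (H z) * (‖g₁ z‖ + ‖g₂ z‖)) := by
          gcongr; exact huH z hz
      _ = _ := by ring
  obtain ⟨h₁, h₂, hh₁, hh₂, hBuh⟩ := hf ▸ hBu
  refine ⟨h₁, h₂, hh₁, hh₂, eqOn_of_mul_eq_mul isOpen_unitDisk isPreconnected_unitDisk hB hB0
    hu.1.continuousOn ((hg₁.1.mul hh₁.1).add (hg₂.1.mul hh₂.1)).continuousOn fun z hz => ?_⟩
  rw [show B z * u z = _ from hBuh z hz, hfac₁ z hz, hfac₂ z hz]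
  ring

lemma idealI2_eq_idealJ2_mul_factor (hB : DifferentiableOn ℂ B unitDisk)
    (hB0 : ∃ z ∈ unitDisk, B z ≠ 0) (hf₁ : Nev f₁) (hf₂ : Nev f₂) (hg₁ : Nev g₁) (hg₂ : Nev g₂)
    (hfac₁ : ∀ z ∈ unitDisk, f₁ z = B z * g₁ z) (hfac₂ : ∀ z ∈ unitDisk, f₂ z = B z * g₂ z)
    (hg : idealI2 g₁ g₂ = idealJ2 g₁ g₂) : idealI2 f₁ f₂ = idealJ2 f₁ f₂ := by
  refine (idealI2_subset_idealJ2 hf₁ hf₂).antisymm fun v ⟨hv, H, hH, hvH⟩ => ?_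
  obtain ⟨u, hud, hvu, huH⟩ := exists_eq_mul_of_norm_le isOpen_unitDisk isPreconnected_unitDisk
    hB hB0 hv.1 (φ := fun z => Real.exp (H z) * (‖g₁ z‖ + ‖g₂ z‖))
    (hH.continuousOn.rexp.mul (hg₁.1.continuousOn.norm.add hg₂.1.continuousOn.norm))
    fun z hz => by
      have := hvH z hz
      rw [hfac₁ z hz, hfac₂ z hz, norm_mul, norm_mul] at this
      linarith
  obtain ⟨h₁, h₂, hh₁, hh₂, huh⟩ := hg ▸ mem_idealJ2_of_norm_le hg₁ hg₂ hud hH huH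
  refine ⟨h₁, h₂, hh₁, hh₂, fun z hz => ?_⟩
  rw [hvu z hz, huh z hz, hfac₁ z hz, hfac₂ z hz]
  ring

end CommonFactor

theorem statement13 (f₁ f₂ g₁ g₂ : ℂ → ℂ) (Λ : ℕ → ℂ) (hΛ : BlaschkeSeq Λ)
    (hf₁ : Nev f₁) (hf₂ : Nev f₂) (hg₁ : Nev g₁) (hg₂ : Nev g₂)
    (hfac₁ : ∀ z ∈ unitDisk, f₁ z = blaschkeProduct Λ z * g₁ z)
    (hfac₂ : ∀ z ∈ unitDisk, f₂ z = blaschkeProduct Λ z * g₂ z)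
    (hnc : ∀ z ∈ unitDisk, g₁ z ≠ 0 ∨ g₂ z ≠ 0) :
    idealI2 f₁ f₂ = idealJ2 f₁ f₂ ↔ idealI2 g₁ g₂ = idealJ2 g₁ g₂ := by
  have hB : DifferentiableOn ℂ (blaschkeProduct Λ) unitDisk := fun z hz => by
    have hzU := isOpen_unitDisk.mem_nhds hz
    refine DifferentiableAt.differentiableWithinAt ?_
    rcases hnc z hz with hgz | hgz
    · exact differentiableAt_of_eventually_eq_mul (hf₁.1.differentiableAt hzU)
        (hg₁.1.differentiableAt hzU) hgz (eventually_of_mem hzU hfac₁)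
    · exact differentiableAt_of_eventually_eq_mul (hf₂.1.differentiableAt hzU)
        (hg₂.1.differentiableAt hzU) hgz (eventually_of_mem hzU hfac₂)
  have hB0 := exists_blaschkeProduct_ne_zero hΛ
  exact ⟨idealI2_eq_idealJ2_cancel_factor hB hB0 hf₁ hf₂ hg₁ hg₂ hfac₁ hfac₂,
    idealI2_eq_idealJ2_mul_factor hB hB0 hf₁ hf₂ hg₁ hg₂ hfac₁ hfac₂⟩

end
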